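/- Let n ≥ 1 and let C, D ∈ ℝ^{n×n} be symmetric matrices. For every matrix P ∈ ℝ^{n×n} whose row sums and column sums all equal 1 (i.e., P·1 = 1 and Pᵀ·1 = 1, where 1 is the all-ones vector), the quadruple sum Σ_{i,j,k,l} (C_{ij} − D_{kl})² P_{ik} P_{jl} equals ‖C‖_F² + ‖D‖_F² − 2·tr(C P D Pᵀ). -/

import Mathlib

/-!
Expanding the square splits the objective into three sums. In the `C i j ^ 2` term the sums over
`k` and `l` are row sums of `P`, and in the `D k l ^ 2` term the sums over `i` and `j` are column
sums, so both marginal constraints collapse these to squared Frobenius norms. The cross term is the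
Frobenius inner product of `C` with `P * D * Pᵀ`, i.e. `trace (C * (P * D * Pᵀ)ᵀ)`, and symmetry
of `D` turns it into `trace (C * P * D * Pᵀ)`.
-/

open Matrix BigOperators

namespace Matrix

variable {ι κ R : Type*} [Fintype ι] [Fintype κ] [CommSemiring R]

theorem sum_mul_mul_of_mulVec_one (P : Matrix ι κ R) (hP : P *ᵥ 1 = 1) (f : ι → ι → R) :
    ∑ i, ∑ j, ∑ k, ∑ l, f i j * P i k * P j l = ∑ i, ∑ j, f i j := by
  have hrow (i : ι) : ∑ k, P i k = 1 := by simpa [mulVec, dotProduct] using congrFun hP i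
  refine Finset.sum_congr rfl fun i _ => Finset.sum_congr rfl fun j _ => ?_
  calc ∑ k, ∑ l, f i j * P i k * P j l = f i j * ((∑ k, P i k) * ∑ l, P j l) := by
        rw [Finset.sum_mul_sum, Finset.mul_sum]
        simp only [Finset.mul_sum, mul_assoc]
    _ = f i j := by rw [hrow, hrow, mul_one, mul_one]

theorem sum_mul_mul_of_transpose_mulVec_one (P : Matrix ι κ R) (hP : Pᵀ *ᵥ 1 = 1)
    (g : κ → κ → R) :
    ∑ i, ∑ j, ∑ k, ∑ l, g k l * P i k * P j l = ∑ k, ∑ l, g k l := by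
  rw [← sum_mul_mul_of_mulVec_one Pᵀ hP g]
  exact Finset.sum_comm_cycle.trans (Finset.sum_congr rfl fun _ _ => Finset.sum_comm_cycle)

theorem sum_mul_mul_mul_eq_trace (C : Matrix ι ι R) (D : Matrix κ κ R) (P : Matrix ι κ R) :
    ∑ i, ∑ j, ∑ k, ∑ l, C i j * D k l * P i k * P j l = trace (C * P * Dᵀ * Pᵀ) := by
  have hcross : C * P * Dᵀ * Pᵀ = C * (P * D * Pᵀ)ᵀ := by
    simp only [transpose_mul, transpose_transpose, Matrix.mul_assoc]
  rw [hcross, ← sum_hadamard_eq]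
  refine Finset.sum_congr rfl fun i _ => Finset.sum_congr rfl fun j _ => ?_
  simp only [hadamard_apply, mul_apply, transpose_apply, Finset.mul_sum, Finset.sum_mul]
  rw [Finset.sum_comm]
  exact Finset.sum_congr rfl fun _ _ => Finset.sum_congr rfl fun _ _ => by ring

end Matrix

theorem gw_koopmans_beckmann (n : ℕ) (C D P : Matrix (Fin n) (Fin n) ℝ)
    (hD : D.IsSymm)
    (hrow : P *ᵥ (fun _ => (1 : ℝ)) = fun _ => 1)
    (hcol : Pᵀ *ᵥ (fun _ => (1 : ℝ)) = fun _ => 1) :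
    ∑ i, ∑ j, ∑ k, ∑ l, (C i j - D k l) ^ 2 * P i k * P j l
      = (∑ i, ∑ j, (C i j) ^ 2) + (∑ i, ∑ j, (D i j) ^ 2)
        - 2 * Matrix.trace (C * P * D * Pᵀ) := by
  have expand (i j k l : Fin n) : (C i j - D k l) ^ 2 * P i k * P j l
      = C i j ^ 2 * P i k * P j l + D k l ^ 2 * P i k * P j l
        - 2 * (C i j * D k l * P i k * P j l) := by ring
  simp only [expand, Finset.sum_add_distrib, Finset.sum_sub_distrib]
  rw [sum_mul_mul_of_mulVec_one P hrow, sum_mul_mul_of_transpose_mulVec_one P hcol]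
  simp only [← Finset.mul_sum]
  rw [sum_mul_mul_mul_eq_trace, hD.eq]
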